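/- In a real normed space with linearly independent vectors x, y, the function h₊(t) := ‖x/‖x‖ + (y+t·x)/‖y+t·x‖‖ is monotone increasing on ℝ, and h₋(t) := ‖x/‖x‖ − (y+t·x)/‖y+t·x‖‖ is monotone decreasing on ℝ. -/

import Mathlib

/-!
Write `g t = ‖y + t • x‖`, a positive convex function for which `t ↦ ‖x‖ * t + g t` is monotone,
since `g` is `‖x‖`-Lipschitz. Pulling out the factor `g t⁻¹` gives
`h₊ t = g (t + g t / ‖x‖) / g t`. For `s ≤ t`, monotonicity of this ratio follows from the
three-point convexity inequality for `s ≤ s + g s / ‖x‖ ≤ t + g t / ‖x‖` and for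
`s ≤ t ≤ t + g t / ‖x‖`. Replacing `x` by `-x` and `t` by `-t` turns `h₋` into `h₊`.
-/

open Set

section ConvexFunction

variable {𝕜 : Type*} [Field 𝕜] [LinearOrder 𝕜] [IsStrictOrderedRing 𝕜]

theorem ConvexOn.mul_le_of_le_of_le {s : Set 𝕜} {f : 𝕜 → 𝕜} (hf : ConvexOn 𝕜 s f) {x y z : 𝕜}
    (hx : x ∈ s) (hz : z ∈ s) (hxy : x ≤ y) (hyz : y ≤ z) :
    (z - x) * f y ≤ (z - y) * f x + (y - x) * f z := by
  rcases hxy.eq_or_lt with rfl | hxy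
  · simp
  rcases hyz.eq_or_lt with rfl | hyz
  · simp
  exact hf.secant_mono_aux1 hx hz hxy hyz

theorem ConvexOn.monotone_apply_add_div_div {g : 𝕜 → 𝕜} {c : 𝕜} (hg : ConvexOn 𝕜 univ g)
    (hg0 : ∀ t, 0 < g t) (hc : 0 < c) (hmono : Monotone fun t => c * t + g t) :
    Monotone fun t => g (t + g t / c) / g t := by
  intro s t hst
  obtain ⟨u, hu⟩ : ∃ u, g s = c * u := ⟨g s / c, (mul_div_cancel₀ _ hc.ne').symm⟩
  obtain ⟨v, hv⟩ : ∃ v, g t = c * v := ⟨g t / c, (mul_div_cancel₀ _ hc.ne').symm⟩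
  simp only [hu, hv, mul_div_cancel_left₀ _ hc.ne']
  have hu0 : 0 < u := pos_of_mul_pos_right (hu ▸ hg0 s) hc.le
  have hv0 : 0 < v := pos_of_mul_pos_right (hv ▸ hg0 t) hc.le
  have huv : u - v ≤ t - s := by
    have := hmono hst
    simp only [hu, hv] at this
    nlinarith
  have h1 := hg.mul_le_of_le_of_le (mem_univ s) (mem_univ (t + v))
    (le_add_of_nonneg_right hu0.le) (by linarith)
  have h2 := hg.mul_le_of_le_of_le (mem_univ s) (mem_univ (t + v)) hst
    (le_add_of_nonneg_right hv0.le)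
  rw [hu, hv] at h2
  rw [hu] at h1
  rw [div_le_div_iff₀ (mul_pos hc hu0) (mul_pos hc hv0)]
  -- `v * h1 + u * h2` telescopes, because `v * (c * u) = u * (c * v)`.
  have key : g (s + u) * v ≤ g (t + v) * u :=
    le_of_mul_le_mul_right (by linear_combination v * h1 + u * h2) (by linarith : 0 < t + v - s)
  calc g (s + u) * (c * v) = c * (g (s + u) * v) := by ring
    _ ≤ c * (g (t + v) * u) := by gcongr
    _ = g (t + v) * (c * u) := by ring

end ConvexFunction

section NormedSpace

variable {X : Type*} [NormedAddCommGroup X] [NormedSpace ℝ X]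

theorem convexOn_univ_norm_add_smul (x y : X) : ConvexOn ℝ univ fun t : ℝ => ‖y + t • x‖ :=
  (convexOn_univ_norm.translate_right y).comp_linearMap (LinearMap.toSpanSingleton ℝ X x)

theorem monotone_mul_add_norm_add_smul (x y : X) :
    Monotone fun t : ℝ => ‖x‖ * t + ‖y + t • x‖ := by
  intro s t hst
  have : ‖y + s • x‖ - ‖y + t • x‖ ≤ ‖x‖ * (t - s) :=
    calc ‖y + s • x‖ - ‖y + t • x‖ ≤ ‖(y + s • x) - (y + t • x)‖ := norm_sub_norm_le _ _
      _ = ‖x‖ * (t - s) := by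
        rw [add_sub_add_left_eq_sub, ← sub_smul, norm_smul, Real.norm_of_nonpos (by linarith)]
        ring
  simp only
  linarith

theorem norm_inv_norm_smul_add_inv_norm_smul (x : X) {u : X} (hu : u ≠ 0) :
    ‖‖x‖⁻¹ • x + ‖u‖⁻¹ • u‖ = ‖u + (‖u‖ / ‖x‖) • x‖ / ‖u‖ := by
  have hu' : ‖u‖ ≠ 0 := norm_ne_zero_iff.2 hu
  have hsum : ‖x‖⁻¹ • x + ‖u‖⁻¹ • u = ‖u‖⁻¹ • (u + (‖u‖ / ‖x‖) • x) := by
    rw [smul_add, smul_smul, div_eq_mul_inv, inv_mul_cancel_left₀ hu', add_comm]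
  rw [hsum, norm_smul, norm_inv, norm_norm, inv_mul_eq_div]

theorem monotone_norm_inv_norm_smul_add {x y : X} (hx : x ≠ 0) (hy : ∀ t : ℝ, y + t • x ≠ 0) :
    Monotone fun t : ℝ => ‖‖x‖⁻¹ • x + ‖y + t • x‖⁻¹ • (y + t • x)‖ := by
  have hg := (convexOn_univ_norm_add_smul x y).monotone_apply_add_div_div
    (fun t => norm_pos_iff.2 (hy t)) (norm_pos_iff.2 hx) (monotone_mul_add_norm_add_smul x y)
  have hsum (t : ℝ) : ‖‖x‖⁻¹ • x + ‖y + t • x‖⁻¹ • (y + t • x)‖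
      = ‖y + (t + ‖y + t • x‖ / ‖x‖) • x‖ / ‖y + t • x‖ := by
    rw [norm_inv_norm_smul_add_inv_norm_smul x (hy t), add_smul, add_assoc]
  simp only [hsum]
  exact hg

end NormedSpace

theorem stmt_11 {X : Type*} [NormedAddCommGroup X] [NormedSpace ℝ X]
    (x y : X) (h : LinearIndependent ℝ ![x, y]) :
    Monotone (fun t : ℝ => ‖(‖x‖)⁻¹ • x + (‖y + t • x‖)⁻¹ • (y + t • x)‖) ∧
    Antitone (fun t : ℝ => ‖(‖x‖)⁻¹ • x - (‖y + t • x‖)⁻¹ • (y + t • x)‖) := by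
  rw [LinearIndependent.pair_iff] at h
  have hx : x ≠ 0 := fun hx => one_ne_zero (h 1 0 (by simp [hx])).1
  have hy : ∀ t : ℝ, y + t • x ≠ 0 := fun t hy =>
    one_ne_zero (h t 1 (by rwa [one_smul, add_comm])).2
  refine ⟨monotone_norm_inv_norm_smul_add hx hy, ?_⟩
  have hneg := (monotone_norm_inv_norm_smul_add (neg_ne_zero.2 hx)
    (fun t => by simpa using hy (-t))).comp_antitone monotone_id.neg
  convert hneg using 1
  funext t
  simp only [Function.comp_apply, id, neg_smul, neg_neg, norm_neg, smul_neg, ← sub_eq_neg_add,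
    norm_sub_rev]
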